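/- Let (η_i)_{i≥0} and (θ_j)_{j≥0} be sequences of pairwise distinct complex numbers, N ≥ 1 with associated integers d, m, and Ω_N, 𝒫_N as in the bidimensional intertwining setting. If (η_p,θ_q) ∈ Ω_N with 0 ≤ p+q ≤ d−2, 0 ≤ p ≤ m−1 and q ≥ d−m, then for all (z,w) ∈ ℂ²: l^{(N)}_{(η_p,θ_q)}(z,w) = ∏_{i=0}^{p−1} (z−η_i)/(η_p−η_i) ∏_{j=0,j≠q}^{d−p} (w−θ_j)/(θ_q−θ_j) − ∏_{i=0}^{p−1} (z−η_i)/(η_p−η_i) ∏_{j=0,j≠q}^{d−p−1} (w−θ_j)/(θ_q−θ_j) + ∏_{i=0,i≠p}^{p+1} (z−η_i)/(η_p−η_i) ∏_{j=0,j≠q}^{d−p−1} (w−θ_j)/(θ_q−θ_j) + Σ_{r=1}^{d−p−q−1} [∏_{i=0,i≠p}^{p+r+1} (z−η_i)/(η_p−η_i) ∏_{j=0,j≠q}^{d−p−r−1} (w−θ_j)/(θ_q−θ_j) − ∏_{i=0,i≠p}^{p+r} (z−η_i)/(η_p−η_i) ∏_{j=0,j≠q}^{d−p−r−1} (w−θ_j)/(θ_q−θ_j)].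 -/

import Mathlib

/-!
A function of `𝒫_N` vanishing on `Ω_N` vanishes identically: the index set is a lower set of `ℕ²`,
so the leading monomial of a nonzero element (highest power of `w`, then of `z`) is isolated by two
one-variable Vandermonde arguments, first along the columns `z = η_k`, then along the top row.
Hence the FLIP is unique, and it suffices to check that the formula is one. Writing `T a b` for the
product of the Lagrange basis polynomials of `η_p` on `η_0, …, η_{a-1}` and of `θ_q` on
`θ_0, …, θ_{b-1}`, the formula is
`T (p+1) (d-p+1) + ∑_{r < d-p-q} (T (p+r+2) (d-p-r) - T (p+r+1) (d-p-r))`.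
Each `T a b` has bidegree `(a-1, b-1)`, a point of the index set. At a node `(η_k, θ_l)`: if `l = q`
the sum telescopes to the basis polynomial of `η_p` on `η_0, …, η_{d-q}`; if `l ≠ q` every term
vanishes, since either `θ_l` is a node of its `w`-factor or `η_k` is a node of both its `z`-factors.
-/

open Finset

/-- The index set of both `Ω_N` and the monomials spanning `𝒫_N` in the bidimensional
intertwining setting with parameters `d`, `m`: pairs `(k,l)` with `k+l < d`, or
`k+l = d` and `k ≤ m`. -/
def BidIdx (d m : ℕ) (p : ℕ × ℕ) : Prop :=
  p.1 + p.2 < d ∨ (p.1 + p.2 = d ∧ p.1 ≤ m)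

/-- The polynomial space `𝒫_N` (as a space of functions on `ℂ²`): the span of the
monomials `z^k w^l` with `(k,l)` in the index set. -/
noncomputable def PolySpace (d m : ℕ) : Submodule ℂ ((ℂ × ℂ) → ℂ) :=
  Submodule.span ℂ
    {f | ∃ k l : ℕ, BidIdx d m (k, l) ∧ f = fun p : ℂ × ℂ => p.1 ^ k * p.2 ^ l}

/-- `L` is the fundamental Lagrange interpolation polynomial (FLIP) of the point
`(η_p, θ_q)` of `Ω_N`: it belongs to `𝒫_N`, equals `1` at `(η_p, θ_q)` and `0` at
every other point of `Ω_N`. -/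
def IsFLIP (η θ : ℕ → ℂ) (d m : ℕ) (p q : ℕ) (L : (ℂ × ℂ) → ℂ) : Prop :=
  L ∈ PolySpace d m ∧ L (η p, θ q) = 1 ∧
    ∀ k l : ℕ, BidIdx d m (k, l) → (k, l) ≠ (p, q) → L (η k, θ l) = 0


open Polynomial

section Unisolvence

variable {R : Type*} [CommRing R] [IsDomain R]

theorem sum_filter_eq_zero_of_sum_mul_pow_eq_zero {ι : Type*} {x : ℕ → R}
    (hx : Function.Injective x) (s : Finset ι) (e : ι → ℕ) (a : ι → R) {n : ℕ}
    (he : ∀ i ∈ s, e i ≤ n) (h : ∀ k ≤ n, ∑ i ∈ s, a i * x k ^ e i = 0) :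
    ∑ i ∈ s with e i = n, a i = 0 := by
  set P : R[X] := ∑ i ∈ s, C (a i) * X ^ e i
  have hdeg : P.degree < #(range (n + 1)) := by
    rw [card_range]
    refine (degree_sum_le _ _).trans_lt ((Finset.sup_lt_iff (WithBot.bot_lt_coe _)).2
      fun i hi => (degree_C_mul_X_pow_le _ _).trans_lt ?_)
    exact_mod_cast Nat.lt_succ_of_le (he i hi)
  have hP : P = 0 := eq_zero_of_degree_lt_of_eval_index_eq_zero _ hx.injOn hdeg fun k hk => by
    simpa [P, eval_finsetSum] using h k (Nat.lt_succ_iff.1 (mem_range.1 hk))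
  simpa [P, finsetSum_coeff, coeff_C_mul_X_pow, sum_filter, eq_comm] using
    congrArg (coeff · n) hP

theorem eq_zero_of_isLowerSet_of_sum_eq_zero {η θ : ℕ → R} (hη : Function.Injective η)
    (hθ : Function.Injective θ) {S : Finset (ℕ × ℕ)} (hS : IsLowerSet (S : Set (ℕ × ℕ)))
    {c : ℕ × ℕ → R} (h : ∀ k ∈ S, ∑ x ∈ S, c x * η k.1 ^ x.1 * θ k.2 ^ x.2 = 0) :
    ∀ x ∈ S, c x = 0 := by
  classical
  by_contra! ⟨x₀, hx₀S, hx₀⟩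
  set T := {x ∈ S | c x ≠ 0}
  have hT : T.Nonempty := ⟨x₀, mem_filter.2 ⟨hx₀S, hx₀⟩⟩
  set b := T.sup' hT Prod.snd
  set Tb := {x ∈ T | x.2 = b}
  have hTb : Tb.Nonempty := by
    obtain ⟨x, hx, hxb⟩ := T.exists_mem_eq_sup' hT Prod.snd
    exact ⟨x, mem_filter.2 ⟨hx, hxb.symm⟩⟩
  set a := Tb.sup' hTb Prod.fst
  have hab : (a, b) ∈ Tb := by
    obtain ⟨x, hx, hxa⟩ := Tb.exists_mem_eq_sup' hTb Prod.fst
    rwa [show (a, b) = x from Prod.ext hxa (mem_filter.1 hx).2.symm]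
  have habT : (a, b) ∈ T := (mem_filter.1 hab).1
  have hgrid : ∀ k ≤ a, ∀ l ≤ b, (k, l) ∈ S := fun k hk l hl =>
    hS (Prod.mk_le_mk.2 ⟨hk, hl⟩) (mem_filter.1 habT).1
  have htopRow : ∀ k ≤ a, ∑ x ∈ Tb, c x * η k ^ x.1 = 0 := fun k hk =>
    sum_filter_eq_zero_of_sum_mul_pow_eq_zero hθ T Prod.snd (fun x => c x * η k ^ x.1)
      (fun x hx => le_sup' _ hx) fun l hl => by
        rw [← h (k, l) (hgrid k hk l hl)]
        exact sum_filter_of_ne fun x _ hx => left_ne_zero_of_mul (left_ne_zero_of_mul hx)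
  have hlead := sum_filter_eq_zero_of_sum_mul_pow_eq_zero hη Tb Prod.fst c
    (fun x hx => le_sup' _ hx) htopRow
  rw [sum_filter, sum_eq_single_of_mem (a, b) hab fun x hx hne => if_neg fun hxa =>
    hne (Prod.ext hxa (mem_filter.1 hx).2), if_pos rfl] at hlead
  exact (mem_filter.1 habT).2 hlead

end Unisolvence

section PolySpace

variable {d m : ℕ}

theorem BidIdx.of_le {x y : ℕ × ℕ} (hy : BidIdx d m y) (hxy : x ≤ y) : BidIdx d m x := by
  obtain ⟨h1, h2⟩ := Prod.mk_le_mk.1 hxy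
  unfold BidIdx at *
  omega

instance (d m : ℕ) : DecidablePred (BidIdx d m) := fun _ => inferInstanceAs (Decidable (_ ∨ _))

variable (d m) in
def bidIdxFinset : Finset (ℕ × ℕ) := {x ∈ range (d + 1) ×ˢ range (d + 1) | BidIdx d m x}

theorem mem_bidIdxFinset {x : ℕ × ℕ} : x ∈ bidIdxFinset d m ↔ BidIdx d m x := by
  rw [bidIdxFinset, mem_filter, and_iff_right_of_imp]
  intro h
  simp only [mem_product, mem_range]
  unfold BidIdx at h
  omega

theorem isLowerSet_bidIdxFinset : IsLowerSet (bidIdxFinset d m : Set (ℕ × ℕ)) :=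
  fun _ _ hxy hy => mem_bidIdxFinset.2 ((mem_bidIdxFinset.1 hy).of_le hxy)

theorem exists_eq_sum_of_mem_polySpace {f : ℂ × ℂ → ℂ} (hf : f ∈ PolySpace d m) :
    ∃ c : ℕ × ℕ → ℂ, ∀ z w, f (z, w) = ∑ x ∈ bidIdxFinset d m, c x * z ^ x.1 * w ^ x.2 := by
  induction hf using Submodule.span_induction with
  | mem f hf =>
    obtain ⟨k, l, hkl, rfl⟩ := hf
    refine ⟨fun x => if x = (k, l) then 1 else 0, fun z w => ?_⟩
    simp [ite_mul, mem_bidIdxFinset.2 hkl]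
  | zero => exact ⟨0, by simp⟩
  | add f g _ _ hf hg =>
    obtain ⟨c, hc⟩ := hf
    obtain ⟨c', hc'⟩ := hg
    exact ⟨c + c', fun z w => by simp [hc, hc', add_mul, sum_add_distrib]⟩
  | smul a f _ hf =>
    obtain ⟨c, hc⟩ := hf
    exact ⟨a • c, fun z w => by simp [hc, mul_sum, mul_assoc]⟩

theorem eq_zero_of_mem_polySpace {η θ : ℕ → ℂ} (hη : Function.Injective η)
    (hθ : Function.Injective θ) {f : ℂ × ℂ → ℂ} (hf : f ∈ PolySpace d m)
    (h : ∀ k l, BidIdx d m (k, l) → f (η k, θ l) = 0) : f = 0 := by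
  obtain ⟨c, hc⟩ := exists_eq_sum_of_mem_polySpace hf
  have hc0 := eq_zero_of_isLowerSet_of_sum_eq_zero hη hθ isLowerSet_bidIdxFinset
    fun k hk => (hc _ _).symm.trans (h k.1 k.2 (mem_bidIdxFinset.1 hk))
  funext ⟨z, w⟩
  rw [hc, Pi.zero_apply]
  exact sum_eq_zero fun x hx => by simp [hc0 x hx]

theorem IsFLIP.unique {η θ : ℕ → ℂ} (hη : Function.Injective η) (hθ : Function.Injective θ)
    {p q : ℕ} {L L' : ℂ × ℂ → ℂ} (hL : IsFLIP η θ d m p q L) (hL' : IsFLIP η θ d m p q L') :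
    L = L' := by
  refine sub_eq_zero.1 (eq_zero_of_mem_polySpace hη hθ (sub_mem hL.1 hL'.1) fun k l hkl => ?_)
  by_cases h : (k, l) = (p, q)
  · obtain ⟨rfl, rfl⟩ := Prod.mk.inj h
    simp [hL.2.1, hL'.2.1]
  · simp [hL.2.2 k l hkl h, hL'.2.2 k l hkl h]

theorem eval_mul_eval_mem_polySpace {g h : ℂ[X]} {A B : ℕ} (hg : g.natDegree ≤ A)
    (hh : h.natDegree ≤ B) (hAB : BidIdx d m (A, B)) :
    (fun zw : ℂ × ℂ => g.eval zw.1 * h.eval zw.2) ∈ PolySpace d m := by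
  have hsum : (fun zw : ℂ × ℂ => g.eval zw.1 * h.eval zw.2) = ∑ k ∈ range (A + 1),
      ∑ l ∈ range (B + 1), (g.coeff k * h.coeff l) • fun zw : ℂ × ℂ => zw.1 ^ k * zw.2 ^ l := by
    funext zw
    simp only [Finset.sum_apply, Pi.smul_apply, smul_eq_mul]
    rw [eval_eq_sum_range' (Nat.lt_succ_of_le hg), eval_eq_sum_range' (Nat.lt_succ_of_le hh),
      sum_mul_sum]
    exact sum_congr rfl fun k _ => sum_congr rfl fun l _ => by ring
  rw [hsum]
  refine sum_mem fun k hk => sum_mem fun l hl => Submodule.smul_mem _ _ (Submodule.subset_span ?_)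
  exact ⟨k, l, hAB.of_le (Prod.mk_le_mk.2 ⟨Nat.lt_succ_iff.1 (mem_range.1 hk),
    Nat.lt_succ_iff.1 (mem_range.1 hl)⟩), rfl⟩

end PolySpace

section LagrangeBasis

variable {K : Type*} [Field K] {x : ℕ → K} {p a : ℕ}

theorem eval_basis_range (hx : Function.Injective x) (hp : p < a) {k : ℕ} (hk : k < a) :
    (Lagrange.basis (range a) x p).eval (x k) = if k = p then 1 else 0 := by
  split_ifs with h
  · subst h
    exact Lagrange.eval_basis_self hx.injOn (mem_range.2 hp)
  · exact Lagrange.eval_basis_of_ne (Ne.symm h) (mem_range.2 hk)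

theorem eval_basis_eq_prod (s : Finset ℕ) (z : K) :
    (Lagrange.basis s x p).eval z = ∏ i ∈ s.erase p, (z - x i) / (x p - x i) := by
  simp [Lagrange.basis, Lagrange.basisDivisor, eval_prod, div_eq_inv_mul]

end LagrangeBasis

section Formula

variable (η θ : ℕ → ℂ) (p q : ℕ)

noncomputable def lagrangeTensor (a b : ℕ) : ℂ × ℂ → ℂ :=
  fun zw => (Lagrange.basis (range a) η p).eval zw.1 * (Lagrange.basis (range b) θ q).eval zw.2

noncomputable def flipFormula (d : ℕ) : ℂ × ℂ → ℂ :=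
  lagrangeTensor η θ p q (p + 1) (d - p + 1) +
    ∑ r ∈ range (d - p - q),
      (lagrangeTensor η θ p q (p + r + 2) (d - p - r) -
        lagrangeTensor η θ p q (p + r + 1) (d - p - r))

variable {η θ p q}

theorem lagrangeTensor_mem_polySpace (hη : Function.Injective η) (hθ : Function.Injective θ)
    {d m a b : ℕ} (hp : p < a) (hq : q < b) (h : BidIdx d m (a - 1, b - 1)) :
    lagrangeTensor η θ p q a b ∈ PolySpace d m :=
  eval_mul_eval_mem_polySpace
    (by rw [Lagrange.natDegree_basis hη.injOn (mem_range.2 hp), card_range])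
    (by rw [Lagrange.natDegree_basis hθ.injOn (mem_range.2 hq), card_range]) h

theorem flipFormula_mem_polySpace (hη : Function.Injective η) (hθ : Function.Injective θ)
    {d m : ℕ} (hpq : p + q ≤ d) (hq : d ≤ q + m) :
    flipFormula η θ p q d ∈ PolySpace d m := by
  refine add_mem (lagrangeTensor_mem_polySpace hη hθ (by omega) (by omega)
    (Or.inr ⟨by omega, by omega⟩)) (sum_mem fun r hr => ?_)
  have hr := mem_range.1 hr
  exact sub_mem (lagrangeTensor_mem_polySpace hη hθ (by omega) (by omega)
    (Or.inr ⟨by omega, by omega⟩)) (lagrangeTensor_mem_polySpace hη hθ (by omega) (by omega)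
    (Or.inl (by omega)))

theorem flipFormula_apply_node (hη : Function.Injective η) (hθ : Function.Injective θ)
    {d k l : ℕ} (hpq : p + q ≤ d) (hkl : k + l ≤ d) :
    flipFormula η θ p q d (η k, θ l) = if (k, l) = (p, q) then 1 else 0 := by
  simp only [flipFormula, Pi.add_apply, Finset.sum_apply, Pi.sub_apply]
  set Z : ℕ → ℂ := fun a => (Lagrange.basis (range a) η p).eval (η k)
  set W : ℕ → ℂ := fun b => (Lagrange.basis (range b) θ q).eval (θ l)
  show Z (p + 1) * W (d - p + 1) +
    ∑ r ∈ range (d - p - q), (Z (p + r + 2) * W (d - p - r) - Z (p + r + 1) * W (d - p - r)) = _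
  have hZ : ∀ a, p < a → k < a → Z a = if k = p then 1 else 0 := fun a hp hk =>
    eval_basis_range hη hp hk
  by_cases hl : l = q
  · subst hl
    have hW : ∀ b, l < b → W b = 1 := fun b hb => by
      simpa using eval_basis_range hθ hb hb
    have htel : ∑ r ∈ range (d - p - l), (Z (p + r + 2) - Z (p + r + 1)) =
        Z (p + (d - p - l) + 1) - Z (p + 1) := by
      simpa [add_assoc] using sum_range_sub (fun r => Z (p + r + 1)) (d - p - l)
    rw [hW _ (by omega), mul_one, sum_congr rfl fun r hr => by
        rw [hW _ (by have := mem_range.1 hr; omega), mul_one, mul_one],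
      htel, add_sub_cancel, hZ _ (by omega) (by omega)]
    simp
  · have hW : ∀ b, l < b → W b = 0 := fun b hb =>
      Lagrange.eval_basis_of_ne (Ne.symm hl) (mem_range.2 hb)
    have hfirst : Z (p + 1) * W (d - p + 1) = 0 := by
      by_cases hb : l < d - p + 1
      · rw [hW _ hb, mul_zero]
      · rw [hZ _ (by omega) (by omega), if_neg (by omega), zero_mul]
    have hsum : ∀ r ∈ range (d - p - q),
        Z (p + r + 2) * W (d - p - r) - Z (p + r + 1) * W (d - p - r) = 0 := fun r _ => by
      by_cases hb : l < d - p - r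
      · rw [hW _ hb, mul_zero, mul_zero, sub_zero]
      · rw [hZ _ (by omega) (by omega), hZ _ (by omega) (by omega), sub_self]
    rw [hfirst, sum_eq_zero hsum, add_zero, if_neg fun h => hl (Prod.mk.inj h).2]

theorem isFLIP_flipFormula (hη : Function.Injective η) (hθ : Function.Injective θ)
    {d m : ℕ} (hpq : p + q ≤ d) (hq : d ≤ q + m) :
    IsFLIP η θ d m p q (flipFormula η θ p q d) := by
  refine ⟨flipFormula_mem_polySpace hη hθ hpq hq, ?_, fun k l hkl hne => ?_⟩
  · simpa using flipFormula_apply_node hη hθ hpq (k := p) (l := q) hpq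
  · have hkl : k + l ≤ d := by unfold BidIdx at hkl; omega
    rw [flipFormula_apply_node hη hθ hpq hkl, if_neg hne]

theorem flipFormula_apply {d : ℕ} (hpq : p + q < d) (z w : ℂ) :
    flipFormula η θ p q d (z, w) =
      (∏ i ∈ range p, (z - η i) / (η p - η i)) *
          (∏ j ∈ (range (d - p + 1)).erase q, (w - θ j) / (θ q - θ j))
        - (∏ i ∈ range p, (z - η i) / (η p - η i)) *
            (∏ j ∈ (range (d - p)).erase q, (w - θ j) / (θ q - θ j))
        + (∏ i ∈ (range (p + 2)).erase p, (z - η i) / (η p - η i)) *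
            (∏ j ∈ (range (d - p)).erase q, (w - θ j) / (θ q - θ j))
        + (∑ r ∈ Finset.Icc 1 (d - p - q - 1),
            ((∏ i ∈ (range (p + r + 2)).erase p, (z - η i) / (η p - η i)) *
                (∏ j ∈ (range (d - p - r)).erase q, (w - θ j) / (θ q - θ j))
              - (∏ i ∈ (range (p + r + 1)).erase p, (z - η i) / (η p - η i)) *
                  (∏ j ∈ (range (d - p - r)).erase q,
                    (w - θ j) / (θ q - θ j)))) := by
  obtain ⟨n, hn⟩ : ∃ n, d - p - q = n + 1 := ⟨d - p - q - 1, by omega⟩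
  have hp : (range (p + 1)).erase p = range p := by
    rw [range_add_one, erase_insert notMem_range_self]
  simp only [flipFormula, lagrangeTensor, Pi.add_apply, Finset.sum_apply, Pi.sub_apply,
    eval_basis_eq_prod]
  rw [hn, sum_range_succ', show n + 1 - 1 = n by omega, ← Ico_add_one_right_eq_Icc,
    sum_Ico_eq_sum_range, Nat.add_sub_cancel]
  simp only [add_zero, Nat.sub_zero, hp, add_comm 1]
  ring

end Formula

theorem statement14_general (η θ : ℕ → ℂ)
    (hη : Function.Injective η) (hθ : Function.Injective θ)
    (d m : ℕ)
    (p q : ℕ) (hpq : p + q + 2 ≤ d) (hq : d ≤ q + m) :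
    ∀ L : (ℂ × ℂ) → ℂ, IsFLIP η θ d m p q L →
      ∀ z w : ℂ,
        L (z, w) =
          (∏ i ∈ range p, (z - η i) / (η p - η i)) *
              (∏ j ∈ (range (d - p + 1)).erase q, (w - θ j) / (θ q - θ j))
            - (∏ i ∈ range p, (z - η i) / (η p - η i)) *
                (∏ j ∈ (range (d - p)).erase q, (w - θ j) / (θ q - θ j))
            + (∏ i ∈ (range (p + 2)).erase p, (z - η i) / (η p - η i)) *
                (∏ j ∈ (range (d - p)).erase q, (w - θ j) / (θ q - θ j))
            + (∑ r ∈ Finset.Icc 1 (d - p - q - 1),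
                ((∏ i ∈ (range (p + r + 2)).erase p, (z - η i) / (η p - η i)) *
                    (∏ j ∈ (range (d - p - r)).erase q, (w - θ j) / (θ q - θ j))
                  - (∏ i ∈ (range (p + r + 1)).erase p, (z - η i) / (η p - η i)) *
                      (∏ j ∈ (range (d - p - r)).erase q,
                        (w - θ j) / (θ q - θ j)))) := by
  intro L hL z w
  rw [hL.unique hη hθ (isFLIP_flipFormula hη hθ (by omega) hq)]
  exact flipFormula_apply (by omega) z w

/-- in the bidimensional intertwining setting, for a point
`(η_p, θ_q) ∈ Ω_N` with `p+q ≤ d−2`, `0 ≤ p ≤ m−1` and `q ≥ d−m`,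
the FLIP is given by the explicit formula with one correcting sum. -/
theorem statement14 (η θ : ℕ → ℂ)
    (hη : Function.Injective η) (hθ : Function.Injective θ)
    (N d m : ℕ) (hN : 1 ≤ N)
    (hlow : d * (d + 1) / 2 < N) (hhigh : N ≤ (d + 1) * (d + 2) / 2)
    (hm : N = d * (d + 1) / 2 + 1 + m)
    (p q : ℕ) (hpq : p + q + 2 ≤ d) (hp : p < m) (hq : d ≤ q + m) :
    ∀ L : (ℂ × ℂ) → ℂ, IsFLIP η θ d m p q L →
      ∀ z w : ℂ,
        L (z, w) =
          (∏ i ∈ range p, (z - η i) / (η p - η i)) *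
              (∏ j ∈ (range (d - p + 1)).erase q, (w - θ j) / (θ q - θ j))
            - (∏ i ∈ range p, (z - η i) / (η p - η i)) *
                (∏ j ∈ (range (d - p)).erase q, (w - θ j) / (θ q - θ j))
            + (∏ i ∈ (range (p + 2)).erase p, (z - η i) / (η p - η i)) *
                (∏ j ∈ (range (d - p)).erase q, (w - θ j) / (θ q - θ j))
            + (∑ r ∈ Finset.Icc 1 (d - p - q - 1),
                ((∏ i ∈ (range (p + r + 2)).erase p, (z - η i) / (η p - η i)) *
                    (∏ j ∈ (range (d - p - r)).erase q, (w - θ j) / (θ q - θ j))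
                  - (∏ i ∈ (range (p + r + 1)).erase p, (z - η i) / (η p - η i)) *
                      (∏ j ∈ (range (d - p - r)).erase q,
                        (w - θ j) / (θ q - θ j)))) :=
  statement14_general η θ hη hθ d m p q hpq hq
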